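/- Let X be an at most countable set and T : X → X such that the associated graph G_T (vertices X, edges {(Tx,x) : x ∈ X}) is connected. Then exactly one of the following holds: (1) G_T is a rootless directed tree; (2) there exist κ ≥ 1 and distinct vertices v_0, …, v_{κ-1} forming a simple cycle in G_T, and a partition R of V_T \ {v_0,…,v_{κ-1}} such that each block R ∈ R, with the induced edges, is a rooted directed tree whose root ω_R receives exactly one edge (v_{i_R}, ω_R) from exactly one cycle vertex v_{i_R}. -/

import Mathlib

/-!
`G_T` contains a directed cycle exactly when `T` has a periodic point, which separates (1) from
(2). If `x₀` is periodic, connectedness puts every periodic point on the orbit of `x₀`; that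
orbit, read backwards, is the cycle. Every other vertex enters the cycle after finitely many
steps, and grouping the vertices by the last point of their orbit before it enters the cycle
gives the trees, rooted at those last points.
-/

open Function Relation

section Orbits

variable {X : Type*} {T : X → X}

theorem exists_iterate_eq_of_reflTransGen {r : X → X → Prop} (hr : ∀ s t, r s t → T t = s)
    {a b : X} (h : ReflTransGen r b a) : ∃ n, T^[n] a = b := by
  induction h with
  | refl => exact ⟨0, rfl⟩
  | tail _ hst ih =>
    obtain ⟨n, hn⟩ := ih
    exact ⟨n + 1, by rw [iterate_succ_apply, hr _ _ hst, hn]⟩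

theorem reflTransGen_iterate (T : X → X) (n : ℕ) (x : X) :
    ReflTransGen (fun s t => T t = s) (T^[n] x) x := by
  induction n with
  | zero => exact .refl
  | succ n ih => exact .head (iterate_succ_apply' T n x).symm ih

theorem exists_iterate_eq_iterate_of_reflTransGen {v w : X}
    (h : ReflTransGen (fun a b => T b = a ∨ T a = b) v w) : ∃ m n, T^[m] v = T^[n] w := by
  induction h with
  | refl => exact ⟨0, 0, rfl⟩
  | tail _ hbc ih =>
    obtain ⟨m, n, hmn⟩ := ih
    rcases hbc with hbc | hbc
    · exact ⟨m, n + 1, by rw [iterate_succ_apply, hbc, hmn]⟩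
    · exact ⟨m + 1, n, by
        rw [iterate_succ_apply', hmn, ← iterate_succ_apply' T n, iterate_succ_apply, hbc]⟩

theorem mem_periodicPts_of_reflTransGen {r : X → X → Prop} (hr : ∀ s t, r s t → T t = s)
    {a b : X} (hab : T b = a) (h : ReflTransGen r b a) : a ∈ periodicPts T := by
  obtain ⟨n, hn⟩ := exists_iterate_eq_of_reflTransGen hr h
  exact mk_mem_periodicPts n.succ_pos <| by
    rw [IsPeriodicPt, IsFixedPt, iterate_succ_apply', hn, hab]

theorem exists_reflTransGen_of_mem_periodicPts {a : X} (ha : a ∈ periodicPts T) :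
    ∃ b, T b = a ∧ ReflTransGen (fun s t => T t = s) b a := by
  obtain ⟨n, hn⟩ :=
    Nat.exists_eq_add_one_of_ne_zero (minimalPeriod_pos_of_mem_periodicPts ha).ne'
  refine ⟨T^[n] a, ?_, reflTransGen_iterate T n a⟩
  have := iterate_minimalPeriod (f := T) (x := a)
  rwa [hn, iterate_succ_apply'] at this

theorem forall_not_reflTransGen_iff_periodicPts_eq_empty :
    (∀ a b : X, T b = a → ¬ ReflTransGen (fun s t => T t = s) b a) ↔
      periodicPts T = ∅ := by
  refine ⟨fun h => Set.eq_empty_of_forall_notMem fun a ha => ?_, fun h a b hab hba => ?_⟩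
  · obtain ⟨b, hab, hba⟩ := exists_reflTransGen_of_mem_periodicPts ha
    exact h a b hab hba
  · exact (h ▸ mem_periodicPts_of_reflTransGen (fun _ _ => id) hab hba : a ∈ (∅ : Set X))

theorem exists_iterate_eq_of_mem_periodicPts {a y : X} (ha : a ∈ periodicPts T) {m k : ℕ}
    (h : T^[m] a = T^[k] y) : ∃ n, T^[n] y = a := by
  obtain ⟨p, hp, hpa⟩ := ha
  refine ⟨p * m - m + k, ?_⟩
  rw [iterate_add_apply, ← h, ← iterate_add_apply,
    Nat.sub_add_cancel (Nat.le_mul_of_pos_left m hp)]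
  exact (hpa.mul_const m).eq

open Fin.NatCast Fin.CommRing in
theorem iterate_apply_add_natCast {κ : ℕ} {f : Fin (κ + 1) → X}
    (hf : ∀ j, T (f (j + 1)) = f j) (m : ℕ) (j : Fin (κ + 1)) : T^[m] (f (j + m)) = f j := by
  induction m with
  | zero => simp
  | succ m ih => rw [Nat.cast_succ, ← add_assoc, iterate_succ_apply, hf, ih]

theorem mem_periodicPts_of_cycle {κ : ℕ} {f : Fin (κ + 1) → X}
    (hf : ∀ j, T (f (j + 1)) = f j) (j : Fin (κ + 1)) : f j ∈ periodicPts T :=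
  mk_mem_periodicPts κ.succ_pos <| by
    have := iterate_apply_add_natCast hf (κ + 1) j
    rwa [Fin.natCast_self, add_zero] at this

/-- The orbit is listed backwards since the edges of `G_T` run from `T x` to `x`. -/
theorem exists_cycle_of_mem_periodicPts {x : X} (hx : x ∈ periodicPts T) :
    ∃ κ, ∃ f : Fin (κ + 1) → X, Injective f ∧ (∀ j, T (f (j + 1)) = f j) ∧
      Set.range f = Set.range (T^[·] x) := by
  obtain ⟨κ, hκ⟩ :=
    Nat.exists_eq_add_one_of_ne_zero (minimalPeriod_pos_of_mem_periodicPts hx).ne'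
  refine ⟨κ, fun j => T^[j.rev] x, fun i j hij => ?_, fun j => ?_, ?_⟩
  · have hlt : ∀ k : Fin (κ + 1), (k.rev : ℕ) ∈ Set.Iio (minimalPeriod T x) := fun k => by
      rw [Set.mem_Iio, hκ]
      exact k.rev.isLt
    exact Fin.rev_injective (Fin.ext (iterate_injOn_Iio_minimalPeriod (hlt i) (hlt j) hij))
  · rcases Fin.eq_castSucc_or_eq_last j with ⟨i, rfl⟩ | rfl
    · simp only [Fin.coeSucc_eq_succ, Fin.rev_succ, Fin.rev_castSucc, Fin.val_succ,
        Fin.val_castSucc, iterate_succ_apply']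
    · have := iterate_minimalPeriod (f := T) (x := x)
      rw [hκ, iterate_succ_apply'] at this
      simpa only [Fin.last_add_one, Fin.rev_zero, Fin.rev_last, Fin.val_last, Fin.val_zero,
        iterate_zero_apply]
  · refine subset_antisymm (Set.range_subset_iff.2 fun j => ⟨j.rev, rfl⟩)
      (Set.range_subset_iff.2 fun n => ?_)
    refine ⟨Fin.rev ⟨n % (κ + 1), Nat.mod_lt _ κ.succ_pos⟩, ?_⟩
    simp only [Fin.rev_rev, ← hκ, iterate_mod_minimalPeriod_eq]

end Orbits

section Basins

variable {X : Type*} (T : X → X) (C : Set X)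

/-- Junk value `0` (`sInf ∅`) when the orbit of `v` never meets `C`. -/
noncomputable def hitTime (v : X) : ℕ := sInf {n | T^[n] v ∈ C}

noncomputable def lastOutside (v : X) : X := T^[hitTime T C v - 1] v

def basin (r : X) : Set X := {v | v ∉ C ∧ lastOutside T C v = r}

variable {T C} {v : X}

theorem iterate_hitTime_mem (h : ∃ n, T^[n] v ∈ C) : T^[hitTime T C v] v ∈ C :=
  Nat.sInf_mem h

theorem iterate_notMem_of_lt_hitTime {k : ℕ} (hk : k < hitTime T C v) : T^[k] v ∉ C :=
  Nat.notMem_of_lt_sInf hk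

theorem hitTime_le {k : ℕ} (hk : T^[k] v ∈ C) : hitTime T C v ≤ k :=
  Nat.sInf_le hk

theorem hitTime_pos (h : ∃ n, T^[n] v ∈ C) (hv : v ∉ C) : 0 < hitTime T C v :=
  Nat.pos_of_ne_zero fun h0 => hv (by simpa [h0] using iterate_hitTime_mem h)

theorem hitTime_apply (hC : ∀ v, ∃ n, T^[n] v ∈ C) (hv : v ∉ C) :
    hitTime T C (T v) = hitTime T C v - 1 := by
  have hpos := hitTime_pos (hC v) hv
  refine le_antisymm (hitTime_le ?_) ?_
  · rw [← iterate_succ_apply, Nat.succ_eq_add_one, Nat.sub_add_cancel hpos]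
    exact iterate_hitTime_mem (hC v)
  · have := hitTime_le (k := hitTime T C (T v) + 1) <| by
      rw [iterate_succ_apply]
      exact iterate_hitTime_mem (hC (T v))
    omega

theorem lastOutside_notMem (h : ∃ n, T^[n] v ∈ C) (hv : v ∉ C) : lastOutside T C v ∉ C :=
  iterate_notMem_of_lt_hitTime (Nat.sub_lt (hitTime_pos h hv) one_pos)

theorem apply_lastOutside_mem (h : ∃ n, T^[n] v ∈ C) (hv : v ∉ C) :
    T (lastOutside T C v) ∈ C := by
  rw [lastOutside, ← iterate_succ_apply' T, Nat.succ_eq_add_one,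
    Nat.sub_add_cancel (hitTime_pos h hv)]
  exact iterate_hitTime_mem h

theorem lastOutside_of_apply_mem (hv : v ∉ C) (hTv : T v ∈ C) : lastOutside T C v = v := by
  have : hitTime T C v = 1 := le_antisymm (hitTime_le hTv) (hitTime_pos ⟨1, hTv⟩ hv)
  simp [lastOutside, this]

theorem lastOutside_apply (hC : ∀ v, ∃ n, T^[n] v ∈ C) (hv : v ∉ C) (hTv : T v ∉ C) :
    lastOutside T C (T v) = lastOutside T C v := by
  have h1 := hitTime_apply hC hv
  have h2 := hitTime_pos (hC (T v)) hTv
  rw [lastOutside, lastOutside, h1, ← iterate_succ_apply]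
  congr 1
  omega

theorem mem_basin_lastOutside (hv : v ∉ C) : v ∈ basin T C (lastOutside T C v) :=
  ⟨hv, rfl⟩

theorem lastOutside_mem_basin (h : ∃ n, T^[n] v ∈ C) (hv : v ∉ C) :
    lastOutside T C v ∈ basin T C (lastOutside T C v) :=
  ⟨lastOutside_notMem h hv,
    lastOutside_of_apply_mem (lastOutside_notMem h hv) (apply_lastOutside_mem h hv)⟩

theorem reflTransGen_of_mem_basin (hC : ∀ v, ∃ n, T^[n] v ∈ C) {r : X}
    (hv : v ∈ basin T C r) :
    ReflTransGen (fun s t => T s = t ∧ s ∈ basin T C r ∧ t ∈ basin T C r) v r := by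
  obtain ⟨n, hn⟩ := Nat.exists_eq_add_one_of_ne_zero (hitTime_pos (hC v) hv.1).ne'
  induction n generalizing v with
  | zero =>
    have : lastOutside T C v = v := by simp [lastOutside, hn]
    rw [← hv.2, this]
  | succ n ih =>
    have hTv : T v ∉ C := by simpa using iterate_notMem_of_lt_hitTime (v := v) (k := 1) (by omega)
    have hTv_mem : T v ∈ basin T C r := ⟨hTv, (lastOutside_apply hC hv.1 hTv).trans hv.2⟩
    exact .head ⟨rfl, hv, hTv_mem⟩ (ih hTv_mem (by rw [hitTime_apply hC hv.1, hn]; rfl))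

end Basins

theorem exists_partition_into_basins {X ι : Type*} {T : X → X} {f : ι → X} (hf : Injective f)
    (hreach : ∀ v, ∃ n, T^[n] v ∈ Set.range f) (hper : periodicPts T ⊆ Set.range f) :
    ∃ 𝓡 : Set (Set X),
      (∀ R ∈ 𝓡, R.Nonempty) ∧
      (𝓡.Pairwise fun R R' => Disjoint R R') ∧
      (⋃₀ 𝓡 = {x : X | x ∉ Set.range f}) ∧
      (∀ R ∈ 𝓡,
        (∀ a ∈ R, ∀ b ∈ R, ReflTransGen
          (fun s t => (T t = s ∧ s ∈ R ∧ t ∈ R) ∨ (T s = t ∧ s ∈ R ∧ t ∈ R)) a b) ∧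
        (∀ a b : X, (T b = a ∧ a ∈ R ∧ b ∈ R) →
          ¬ ReflTransGen (fun s t => T t = s ∧ s ∈ R ∧ t ∈ R) b a) ∧
        (∃ ω ∈ R, (∀ x ∈ R, ¬ (T ω = x)) ∧ ∃! i : ι, T ω = f i)) := by
  set C := Set.range f
  refine ⟨(fun v => basin T C (lastOutside T C v)) '' Cᶜ, ?_, ?_, ?_, ?_⟩
  · rintro _ ⟨v, hv, rfl⟩
    exact ⟨v, mem_basin_lastOutside hv⟩
  · rintro _ ⟨v, -, rfl⟩ _ ⟨w, -, rfl⟩ hne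
    exact Set.disjoint_left.2 fun u hv hw => hne (congrArg (basin T C) (hv.2.symm.trans hw.2))
  · ext x
    simp only [Set.mem_sUnion, Set.mem_image]
    exact ⟨fun ⟨_, ⟨v, hv, hR⟩, hx⟩ => (hR ▸ hx).1,
      fun hx => ⟨_, ⟨x, hx, rfl⟩, mem_basin_lastOutside hx⟩⟩
  · rintro _ ⟨v, hv, rfl⟩
    set R := basin T C (lastOutside T C v)
    refine ⟨fun a ha b hb => ?_, ?_, ?_⟩
    · set E := fun s t => (T t = s ∧ s ∈ R ∧ t ∈ R) ∨ (T s = t ∧ s ∈ R ∧ t ∈ R)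
      have hE : ∀ u ∈ R, ReflTransGen E u (lastOutside T C v) := fun u hu =>
        ReflTransGen.mono (fun _ _ => Or.inr) _ _ (reflTransGen_of_mem_basin hreach hu)
      have : Std.Symm E := ⟨fun _ _ h => by tauto⟩
      exact (hE a ha).trans (Std.Symm.symm _ _ (hE b hb))
    · rintro a b ⟨hab, ha, -⟩ hba
      exact ha.1 (hper (mem_periodicPts_of_reflTransGen (fun _ _ h => h.1) hab hba))
    · obtain ⟨i, hi⟩ := apply_lastOutside_mem (hreach v) hv
      refine ⟨_, lastOutside_mem_basin (hreach v) hv, fun x hx hx' => hx.1 (hx' ▸ ⟨i, hi⟩),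
        i, hi.symm, fun j hj => hf (hj.symm.trans hi.symm)⟩

theorem stmt_8_general {X : Type*} (T : X → X)
    (hconn : ∀ v w : X,
      Relation.ReflTransGen (fun a b => T b = a ∨ T a = b) v w) :
    Xor'
      -- (1) `G_T` is a rootless directed tree
      ((∀ a b : X, T b = a → ¬ Relation.ReflTransGen (fun s t => T t = s) b a) ∧
        (∀ x a b : X, T x = a → T x = b → a = b) ∧
        (∀ v : X, ∃ u : X, T v = u))
      -- (2) `G_T` has a simple cycle with rooted directed trees attached
      (∃ κ : ℕ, ∃ f : Fin (κ + 1) → X, Function.Injective f ∧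
        (∀ j : Fin (κ + 1), T (f (j + 1)) = f j) ∧
        ∃ 𝓡 : Set (Set X),
          (∀ R ∈ 𝓡, R.Nonempty) ∧
          (𝓡.Pairwise fun R R' => Disjoint R R') ∧
          (⋃₀ 𝓡 = {x : X | x ∉ Set.range f}) ∧
          (∀ R ∈ 𝓡,
            -- connected within `R` (undirectedly)
            (∀ a ∈ R, ∀ b ∈ R, Relation.ReflTransGen
              (fun s t => (T t = s ∧ s ∈ R ∧ t ∈ R) ∨ (T s = t ∧ s ∈ R ∧ t ∈ R)) a b) ∧
            -- no directed cycles within `R`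
            (∀ a b : X, (T b = a ∧ a ∈ R ∧ b ∈ R) →
              ¬ Relation.ReflTransGen (fun s t => T t = s ∧ s ∈ R ∧ t ∈ R) b a) ∧
            -- root of `R`, joined to exactly one cycle vertex
            (∃ ω ∈ R, (∀ x ∈ R, ¬ (T ω = x)) ∧ ∃! i : Fin (κ + 1), T ω = f i))) := by
  rw [and_iff_left ⟨fun _ _ _ ha hb => ha.symm.trans hb, fun v => ⟨T v, rfl⟩⟩,
    forall_not_reflTransGen_iff_periodicPts_eq_empty]
  rcases (periodicPts T).eq_empty_or_nonempty with hper | ⟨x₀, hx₀⟩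
  · refine .inl ⟨hper, ?_⟩
    rintro ⟨κ, f, -, hf, -⟩
    exact hper.subset (mem_periodicPts_of_cycle hf 0)
  · obtain ⟨κ, f, hinj, hf, hrange⟩ := exists_cycle_of_mem_periodicPts hx₀
    refine .inr ⟨⟨κ, f, hinj, hf, exists_partition_into_basins hinj (fun v => ?_)
      (fun a ha => ?_)⟩,
      (Set.nonempty_of_mem hx₀).ne_empty⟩
    · obtain ⟨m, n, h⟩ := exists_iterate_eq_iterate_of_reflTransGen (hconn v x₀)
      exact ⟨m, hrange ▸ h ▸ ⟨n, rfl⟩⟩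
    · obtain ⟨m, n, h⟩ := exists_iterate_eq_iterate_of_reflTransGen (hconn a x₀)
      exact hrange ▸ exists_iterate_eq_of_mem_periodicPts ha h

/-- Classification of the graph `G_T` (vertices `X`, edges `{(Tx, x) : x ∈ X}`) of a
self-map `T` of an at most countable set `X`, assuming `G_T` is connected: exactly one of
the following holds. (1) `G_T` is a rootless directed tree (no directed cycles, in-degree
at most 1, every vertex has an incoming edge).  (2) There are `κ ≥ 1` distinct vertices
`v_0, …, v_{κ-1}` forming a simple cycle, and a partition `𝓡` of the remaining vertices
such that every block `R ∈ 𝓡` with the induced edges is a rooted directed tree whose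
root `ω_R` receives exactly one edge from exactly one cycle vertex. -/
theorem stmt_8 {X : Type*} [Countable X] (T : X → X)
    (hconn : ∀ v w : X,
      Relation.ReflTransGen (fun a b => T b = a ∨ T a = b) v w) :
    Xor'
      -- (1) `G_T` is a rootless directed tree
      ((∀ a b : X, T b = a → ¬ Relation.ReflTransGen (fun s t => T t = s) b a) ∧
        (∀ x a b : X, T x = a → T x = b → a = b) ∧
        (∀ v : X, ∃ u : X, T v = u))
      -- (2) `G_T` has a simple cycle with rooted directed trees attached
      (∃ κ : ℕ, ∃ f : Fin (κ + 1) → X, Function.Injective f ∧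
        (∀ j : Fin (κ + 1), T (f (j + 1)) = f j) ∧
        ∃ 𝓡 : Set (Set X),
          (∀ R ∈ 𝓡, R.Nonempty) ∧
          (𝓡.Pairwise fun R R' => Disjoint R R') ∧
          (⋃₀ 𝓡 = {x : X | x ∉ Set.range f}) ∧
          (∀ R ∈ 𝓡,
            -- connected within `R` (undirectedly)
            (∀ a ∈ R, ∀ b ∈ R, Relation.ReflTransGen
              (fun s t => (T t = s ∧ s ∈ R ∧ t ∈ R) ∨ (T s = t ∧ s ∈ R ∧ t ∈ R)) a b) ∧
            -- no directed cycles within `R`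
            (∀ a b : X, (T b = a ∧ a ∈ R ∧ b ∈ R) →
              ¬ Relation.ReflTransGen (fun s t => T t = s ∧ s ∈ R ∧ t ∈ R) b a) ∧
            -- root of `R`, joined to exactly one cycle vertex
            (∃ ω ∈ R, (∀ x ∈ R, ¬ (T ω = x)) ∧ ∃! i : Fin (κ + 1), T ω = f i))) :=
  stmt_8_general T hconn
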